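/- Let g₁,…,gₙ be independent random vectors in ℝ^d with E[g_i] = v for a common fixed vector v and E[‖g_i − v‖²] ≤ σ². Let C₁,…,Cₙ be independent unbiased compressors in U(ω) (independent of the g_i and each other). Then E[‖(1/n)∑_i C_i(g_i)‖²] ≤ ((ω+1)/n)σ² + (ω/n + 1)‖v‖². -/

import Mathlib

open MeasureTheory ProbabilityTheory

local notation "⟪" x ", " y "⟫" => @inner ℝ _ _ x y

lemma expand_sq' {Ω : Type*} [MeasurableSpace Ω] (μ : Measure Ω) [IsProbabilityMeasure μ]
    {F : Type*} [NormedAddCommGroup F] [InnerProductSpace ℝ F] [CompleteSpace F]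
    (f : Ω → F) (m : F) (hf : Integrable f μ)
    (hf2 : Integrable (fun ω => ‖f ω‖ ^ 2) μ) (hm : ∫ ω, f ω ∂μ = m) :
    ∫ ω, ‖f ω‖ ^ 2 ∂μ = ∫ ω, ‖f ω - m‖ ^ 2 ∂μ + ‖m‖ ^ 2 := by
  have hfm : Integrable (fun ω => f ω - m) μ := hf.sub (integrable_const m)
  have h1 : Integrable (fun ω => ⟪f ω - m, m⟫) μ := by
    have := (innerSL ℝ m).integrable_comp hfm
    simp only [innerSL_apply_apply] at this
    exact this.congr (Filter.Eventually.of_forall fun ω => real_inner_comm _ _)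
  have h2 : Integrable (fun ω => ‖f ω - m‖ ^ 2) μ := by
    have key : (fun ω => ‖f ω - m‖ ^ 2) =
        fun ω => ‖f ω‖ ^ 2 - 2 * ⟪f ω - m, m⟫ - ‖m‖ ^ 2 := by
      funext ω
      have := norm_add_sq_real (f ω - m) m
      simp only [sub_add_cancel] at this
      linarith
    rw [key]
    exact (hf2.sub ((h1.const_mul 2))).sub (integrable_const _)
  have hzero : ∫ ω, ⟪f ω - m, m⟫ ∂μ = 0 := by
    have e : ∫ ω, ⟪f ω - m, m⟫ ∂μ = ⟪m, ∫ ω, (f ω - m) ∂μ⟫ := by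
      have t := (innerSL ℝ m).integral_comp_comm hfm
      simp only [innerSL_apply_apply] at t
      rw [← t]
      exact integral_congr_ae (Filter.Eventually.of_forall fun ω => real_inner_comm _ _)
    rw [e, integral_sub hf (integrable_const m), hm, integral_const]
    simp
  have key : ∀ ω, ‖f ω‖ ^ 2 = ‖f ω - m‖ ^ 2 + (2 * ⟪f ω - m, m⟫ + ‖m‖ ^ 2) := by
    intro ω
    have := norm_add_sq_real (f ω - m) m
    simp only [sub_add_cancel] at this
    linarith
  have h3 : Integrable (fun ω => 2 * ⟪f ω - m, m⟫ + ‖m‖ ^ 2) μ :=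
    (h1.const_mul 2).add (integrable_const _)
  calc ∫ ω, ‖f ω‖ ^ 2 ∂μ
      = ∫ ω, (‖f ω - m‖ ^ 2 + (2 * ⟪f ω - m, m⟫ + ‖m‖ ^ 2)) ∂μ :=
        integral_congr_ae (Filter.Eventually.of_forall key)
    _ = ∫ ω, ‖f ω - m‖ ^ 2 ∂μ + ∫ ω, (2 * ⟪f ω - m, m⟫ + ‖m‖ ^ 2) ∂μ :=
        integral_add h2 h3
    _ = ∫ ω, ‖f ω - m‖ ^ 2 ∂μ + ‖m‖ ^ 2 := by
        rw [integral_add (h1.const_mul 2) (integrable_const _), integral_const_mul, hzero,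
          integral_const]
        simp

lemma indep_integral_inner' {Ω : Type*} [MeasurableSpace Ω] {μ : Measure Ω}
    [IsProbabilityMeasure μ] {d : ℕ} {X Y : Ω → EuclideanSpace ℝ (Fin d)}
    (h : IndepFun X Y μ) (hX : Integrable X μ) (hY : Integrable Y μ) :
    ∫ ω, ⟪X ω, Y ω⟫ ∂μ = ⟪∫ ω, X ω ∂μ, ∫ ω, Y ω ∂μ⟫ := by
  have hXk : ∀ k : Fin d, Integrable (fun ω => X ω k) μ := by
    intro k
    have := (EuclideanSpace.proj (𝕜 := ℝ) k).integrable_comp hX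
    simpa using this
  have hYk : ∀ k : Fin d, Integrable (fun ω => Y ω k) μ := by
    intro k
    have := (EuclideanSpace.proj (𝕜 := ℝ) k).integrable_comp hY
    simpa using this
  have hmeas : ∀ k : Fin d, Measurable (fun x : EuclideanSpace ℝ (Fin d) => x k) := by
    intro k
    exact (EuclideanSpace.proj (𝕜 := ℝ) k).measurable
  have hind : ∀ k : Fin d, IndepFun (fun ω => X ω k) (fun ω => Y ω k) μ := by
    intro k
    exact h.comp (hmeas k) (hmeas k)
  have hmul : ∀ k : Fin d, Integrable (fun ω => (X ω k) * (Y ω k)) μ := fun k =>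
    (hind k).integrable_mul (hXk k) (hYk k)
  have hcoord : ∀ k : Fin d,
      ∫ ω, (X ω k) * (Y ω k) ∂μ = (∫ ω, X ω ∂μ) k * (∫ ω, Y ω ∂μ) k := by
    intro k
    have t := (hind k).integral_fun_mul_eq_mul_integral (hXk k).1 (hYk k).1
    have t' : ∫ ω, (X ω k) * (Y ω k) ∂μ =
        (∫ ω, X ω k ∂μ) * ∫ ω, Y ω k ∂μ := t
    rw [t']
    have e1 := (EuclideanSpace.proj (𝕜 := ℝ) k).integral_comp_comm hX
    have e2 := (EuclideanSpace.proj (𝕜 := ℝ) k).integral_comp_comm hY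
    simp only [PiLp.proj_apply] at e1 e2
    rw [e1, e2]
  simp only [PiLp.inner_apply, RCLike.inner_apply, conj_trivial]
  rw [integral_finset_sum _ (fun k _ => (hmul k).congr (Filter.Eventually.of_forall fun ω => mul_comm _ _))]
  exact Finset.sum_congr rfl fun k _ => by simpa only [mul_comm] using hcoord k

theorem homogeneous_compressed_stochastic_bound (d n : ℕ) (hn : 0 < n)
    {Ω₁ Ω₂ : Type*} [MeasurableSpace Ω₁] [MeasurableSpace Ω₂]
    (μ₁ : Measure Ω₁) (μ₂ : Measure Ω₂)
    [IsProbabilityMeasure μ₁] [IsProbabilityMeasure μ₂]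
    (g : Fin n → Ω₁ → EuclideanSpace ℝ (Fin d))
    (C : Fin n → Ω₂ → EuclideanSpace ℝ (Fin d) → EuclideanSpace ℝ (Fin d))
    (v : EuclideanSpace ℝ (Fin d)) (σ ω₀ : ℝ) (hσ : 0 ≤ σ) (hω : 0 ≤ ω₀)
    -- the stochastic gradients are independent, unbiased with common mean v,
    -- and have variance bounded by σ²
    (hgindep : iIndepFun g μ₁)
    (hgmean : ∀ i, ∫ ω, g i ω ∂μ₁ = v)
    (hgvar : ∀ i, ∫ ω, ‖g i ω - v‖ ^ 2 ∂μ₁ ≤ σ ^ 2)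
    -- the compressors are independent (of each other, and of the gradients since
    -- they live on the independent coordinate Ω₂), unbiased with variance parameter ω₀
    (hCindep : ∀ u : Fin n → EuclideanSpace ℝ (Fin d),
      iIndepFun (fun i ω => C i ω (u i)) μ₂)
    (hCunb : ∀ i u, ∫ ω, C i ω u ∂μ₂ = u)
    (hCvar : ∀ i u, ∫ ω, ‖C i ω u - u‖ ^ 2 ∂μ₂ ≤ ω₀ * ‖u‖ ^ 2)
    -- integrability
    (hgint : ∀ i, Integrable (g i) μ₁)
    (hgint2 : ∀ i, Integrable (fun ω => ‖g i ω‖ ^ 2) μ₁)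
    (hint : ∀ i, Integrable (fun p : Ω₁ × Ω₂ => C i p.2 (g i p.1)) (μ₁.prod μ₂))
    (hint2 : ∀ i, Integrable (fun p : Ω₁ × Ω₂ => ‖C i p.2 (g i p.1)‖ ^ 2) (μ₁.prod μ₂)) :
    ∫ p, ‖(n : ℝ)⁻¹ • ∑ i, C i p.2 (g i p.1)‖ ^ 2 ∂(μ₁.prod μ₂) ≤
      (ω₀ + 1) / n * σ ^ 2 + (ω₀ / n + 1) * ‖v‖ ^ 2 := by
  set X : Fin n → Ω₁ × Ω₂ → EuclideanSpace ℝ (Fin d) :=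
    fun i p => C i p.2 (g i p.1) with hX
  set μ : Measure (Ω₁ × Ω₂) := μ₁.prod μ₂ with hμ
  set A : ℝ := (ω₀ + 1) * (σ ^ 2 + ‖v‖ ^ 2) with hA
  set B : ℝ := ‖v‖ ^ 2 with hB
  -- integrability of pairwise inner products
  have hinner_int : ∀ i j : Fin n, Integrable (fun p => ⟪X i p, X j p⟫) μ := by
    intro i j
    have hgsum : Integrable (fun p => 2⁻¹ * (‖X i p‖ ^ 2 + ‖X j p‖ ^ 2)) μ := by
      have := ((hint2 i).add (hint2 j)).const_mul 2⁻¹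
      simpa [Pi.add_apply] using this
    refine Integrable.mono' hgsum ((hint i).1.inner (hint j).1) ?_
    filter_upwards with p
    have h1 := abs_real_inner_le_norm (X i p) (X j p)
    have h2 := sq_nonneg (‖X i p‖ - ‖X j p‖)
    have := norm_nonneg (X i p); have := norm_nonneg (X j p)
    rw [Real.norm_eq_abs]
    nlinarith
  -- off-diagonal terms
  have hoff : ∀ i j : Fin n, i ≠ j → ∫ p, ⟪X i p, X j p⟫ ∂μ = B := by
    intro i j hij
    rw [hμ, integral_prod _ (hinner_int i j)]
    have hae : ∀ᵐ ω₁ ∂μ₁,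
        ∫ ω₂, ⟪C i ω₂ (g i ω₁), C j ω₂ (g j ω₁)⟫ ∂μ₂ = ⟪g i ω₁, g j ω₁⟫ := by
      filter_upwards [(hint i).prod_right_ae, (hint j).prod_right_ae] with ω₁ h1 h2
      have hi := (hCindep (fun k => g k ω₁)).indepFun hij
      rw [indep_integral_inner' hi h1 h2, hCunb, hCunb]
    rw [integral_congr_ae hae,
      indep_integral_inner' (hgindep.indepFun hij) (hgint i) (hgint j), hgmean, hgmean, hB,
      real_inner_self_eq_norm_sq]
  -- diagonal terms
  have hdiag : ∀ i : Fin n, ∫ p, ⟪X i p, X i p⟫ ∂μ ≤ A := by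
    intro i
    have e : ∫ p, ⟪X i p, X i p⟫ ∂μ = ∫ p, ‖X i p‖ ^ 2 ∂μ :=
      integral_congr_ae (Filter.Eventually.of_forall fun p =>
        real_inner_self_eq_norm_sq _)
    rw [e, hμ, integral_prod _ (hint2 i)]
    have hae : ∀ᵐ ω₁ ∂μ₁,
        ∫ ω₂, ‖C i ω₂ (g i ω₁)‖ ^ 2 ∂μ₂ ≤ (ω₀ + 1) * ‖g i ω₁‖ ^ 2 := by
      filter_upwards [(hint i).prod_right_ae, (hint2 i).prod_right_ae] with ω₁ h1 h2
      rw [expand_sq' μ₂ _ (g i ω₁) h1 h2 (hCunb i (g i ω₁))]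
      have := hCvar i (g i ω₁)
      nlinarith
    have hL : Integrable (fun ω₁ => ∫ ω₂, ‖C i ω₂ (g i ω₁)‖ ^ 2 ∂μ₂) μ₁ :=
      (hint2 i).integral_prod_left
    have hR : Integrable (fun ω₁ => (ω₀ + 1) * ‖g i ω₁‖ ^ 2) μ₁ :=
      (hgint2 i).const_mul (ω₀ + 1)
    calc ∫ ω₁, ∫ ω₂, ‖C i ω₂ (g i ω₁)‖ ^ 2 ∂μ₂ ∂μ₁
        ≤ ∫ ω₁, (ω₀ + 1) * ‖g i ω₁‖ ^ 2 ∂μ₁ := integral_mono_ae hL hR hae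
      _ = (ω₀ + 1) * ∫ ω₁, ‖g i ω₁‖ ^ 2 ∂μ₁ := integral_const_mul _ _
      _ ≤ A := by
          rw [hA]
          have e2 := expand_sq' μ₁ (g i) v (hgint i) (hgint2 i) (hgmean i)
          have := hgvar i
          nlinarith
  -- expand the square of the norm of the average
  have expand : ∀ p : Ω₁ × Ω₂, ‖(n : ℝ)⁻¹ • ∑ i, X i p‖ ^ 2 =
      ((n : ℝ)⁻¹) ^ 2 * ∑ i, ∑ j, ⟪X i p, X j p⟫ := by
    intro p
    rw [norm_smul, mul_pow, ← real_inner_self_eq_norm_sq (∑ i, X i p), sum_inner]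
    simp_rw [inner_sum]
    congr 1
    simp [abs_of_nonneg (by positivity : (0:ℝ) ≤ (n : ℝ)⁻¹)]
  have step1 : ∫ p, ‖(n : ℝ)⁻¹ • ∑ i, X i p‖ ^ 2 ∂μ =
      ((n : ℝ)⁻¹) ^ 2 * ∑ i, ∑ j, ∫ p, ⟪X i p, X j p⟫ ∂μ := by
    rw [integral_congr_ae (Filter.Eventually.of_forall expand), integral_const_mul,
      integral_finset_sum _ (fun i _ => integrable_finset_sum _ (fun j _ => hinner_int i j))]
    congr 1
    exact Finset.sum_congr rfl fun i _ => integral_finset_sum _ (fun j _ => hinner_int i j)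
  have hsum : ∑ i : Fin n, ∑ j : Fin n, ∫ p, ⟪X i p, X j p⟫ ∂μ ≤
      (n : ℝ) * (A + ((n : ℝ) - 1) * B) := by
    have hrow : ∀ i : Fin n, ∑ j : Fin n, ∫ p, ⟪X i p, X j p⟫ ∂μ ≤ A + ((n : ℝ) - 1) * B := by
      intro i
      have hb : ∀ j : Fin n, ∫ p, ⟪X i p, X j p⟫ ∂μ ≤ if i = j then A else B := by
        intro j
        by_cases hij : i = j
        · simp only [hij, if_pos rfl] at *
          exact hdiag j
        · rw [if_neg hij, hoff i j hij]
      calc ∑ j : Fin n, ∫ p, ⟪X i p, X j p⟫ ∂μ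
          ≤ ∑ j : Fin n, (if i = j then A else B) := Finset.sum_le_sum fun j _ => hb j
        _ = A + ((n : ℝ) - 1) * B := by
            have : (fun j : Fin n => if i = j then A else B) =
                fun j => B + if i = j then A - B else 0 := by
              funext j; split <;> ring
            rw [this, Finset.sum_add_distrib, Finset.sum_const, Finset.sum_ite_eq]
            simp [Finset.card_univ]
            ring
      
    calc ∑ i : Fin n, ∑ j : Fin n, ∫ p, ⟪X i p, X j p⟫ ∂μ
        ≤ ∑ _i : Fin n, (A + ((n : ℝ) - 1) * B) := Finset.sum_le_sum fun i _ => hrow i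
      _ = (n : ℝ) * (A + ((n : ℝ) - 1) * B) := by
          rw [Finset.sum_const, Finset.card_univ]
          simp only [nsmul_eq_mul, Fintype.card_fin]
  have hn' : (0 : ℝ) < n := by exact_mod_cast hn
  calc ∫ p, ‖(n : ℝ)⁻¹ • ∑ i, X i p‖ ^ 2 ∂μ
      = ((n : ℝ)⁻¹) ^ 2 * ∑ i, ∑ j, ∫ p, ⟪X i p, X j p⟫ ∂μ := step1
    _ ≤ ((n : ℝ)⁻¹) ^ 2 * ((n : ℝ) * (A + ((n : ℝ) - 1) * B)) :=
        mul_le_mul_of_nonneg_left hsum (by positivity)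
    _ = (ω₀ + 1) / n * σ ^ 2 + (ω₀ / n + 1) * ‖v‖ ^ 2 := by
        rw [hA, hB]
        field_simp
        ring
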